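/- arXiv:2502.15415 — 3 statements merged into one kernel-verified Lean document; each statement's English description precedes it below -/
import Mathlib

section
/- Let k ≥ 1, let P, Q, R, S be Hermitian positive definite k×k complex matrices, and let φ, ψ, η, ξ > 0 be real numbers. Then the generalized beta matrix function satisfies the recurrence B_{(φ,ψ)}^{(R,S,η,ξ)}(P+I,Q) + B_{(φ,ψ)}^{(R,S,η,ξ)}(P,Q+I) = B_{(φ,ψ)}^{(R,S,η,ξ)}(P,Q). -/
open MeasureTheory Real
open scoped Matrix.Norms.L2Operator ComplexOrder

noncomputable section

/-- For a real `t > 0` and a square complex matrix `A`, `t ^ A := exp (A · log t)`. -/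
def mpow {k : ℕ} (t : ℝ) (A : Matrix (Fin k) (Fin k) ℂ) : Matrix (Fin k) (Fin k) ℂ :=
  NormedSpace.exp ((Real.log t : ℂ) • A)

/-- The two-parameter matrix Mittag-Leffler function `E_{φ,ψ}(A) = ∑ Aⁿ / Γ(φn + ψ)`. -/
def mittagLeffler {k : ℕ} (φ ψ : ℝ) (A : Matrix (Fin k) (Fin k) ℂ) :
    Matrix (Fin k) (Fin k) ℂ :=
  ∑' n : ℕ, (Real.Gamma (φ * n + ψ))⁻¹ • A ^ n

/-- The integrand of the generalized beta-logarithmic matrix function: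
`a^{1-x} b^x · x^{P-I} (1-x)^{Q-I} E_{φ,ψ}(−R x^{−η}) E_{φ,ψ}(−S (1−x)^{−ξ})`. -/
def gblKernel {k : ℕ} (φ ψ η ξ : ℝ) (R S : Matrix (Fin k) (Fin k) ℂ) (a b : ℝ)
    (P Q : Matrix (Fin k) (Fin k) ℂ) (x : ℝ) : Matrix (Fin k) (Fin k) ℂ :=
  (a ^ (1 - x) * b ^ x : ℝ) •
    (mpow x (P - 1) * mpow (1 - x) (Q - 1) *
      mittagLeffler φ ψ ((-(x ^ (-η)) : ℝ) • R) *
      mittagLeffler φ ψ ((-((1 - x) ^ (-ξ)) : ℝ) • S))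

/-- The generalized beta-logarithmic matrix function `BL_{(φ,ψ)}^{(R,S,η,ξ)}(a,b;P,Q)`. -/
def GBL {k : ℕ} (φ ψ η ξ : ℝ) (R S : Matrix (Fin k) (Fin k) ℂ) (a b : ℝ)
    (P Q : Matrix (Fin k) (Fin k) ℂ) : Matrix (Fin k) (Fin k) ℂ :=
  ∫ x in Set.Ioo (0 : ℝ) 1, gblKernel φ ψ η ξ R S a b P Q x

/-- The generalized beta matrix function `B_{(φ,ψ)}^{(R,S,η,ξ)}(P,Q) = BL(1,1;P,Q)`. -/
def GB {k : ℕ} (φ ψ η ξ : ℝ) (R S : Matrix (Fin k) (Fin k) ℂ)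
    (P Q : Matrix (Fin k) (Fin k) ℂ) : Matrix (Fin k) (Fin k) ℂ :=
  GBL φ ψ η ξ R S 1 1 P Q

lemma mpow_add_one {k : ℕ} {x : ℝ} (hx : 0 < x) (A : Matrix (Fin k) (Fin k) ℂ) :
    mpow x (A + 1) = (x : ℂ) • mpow x A := by
  have hlog_one : (Real.log x : ℂ) • (1 : Matrix (Fin k) (Fin k) ℂ) =
      algebraMap ℂ (Matrix (Fin k) (Fin k) ℂ) (Real.log x : ℂ) :=
    (Algebra.algebraMap_eq_smul_one _).symm
  unfold mpow
  rw [smul_add, Matrix.exp_add_of_commute _ _ (((Commute.one_right A).smul_right _).smul_left _),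
    hlog_one, ← NormedSpace.algebraMap_exp_comm, ← Complex.exp_eq_exp_ℂ, ← Complex.ofReal_exp,
    Real.exp_log hx, Algebra.algebraMap_eq_smul_one, mul_smul_comm, mul_one]

section Recurrence

variable {k : ℕ} (φ ψ η ξ : ℝ) (R S : Matrix (Fin k) (Fin k) ℂ) (a b : ℝ)
  (P Q : Matrix (Fin k) (Fin k) ℂ)

/-- Pointwise, the recurrence is `x^{P} (1-x)^{Q-I} + x^{P-I} (1-x)^{Q} = x^{P-I} (1-x)^{Q-I}`,
since the extra scalar factors `x` and `1 - x` add up to `1`. -/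
lemma gblKernel_add_one_add_gblKernel_add_one {x : ℝ} (hx : x ∈ Set.Ioo (0 : ℝ) 1) :
    gblKernel φ ψ η ξ R S a b (P + 1) Q x + gblKernel φ ψ η ξ R S a b P (Q + 1) x =
      gblKernel φ ψ η ξ R S a b P Q x := by
  obtain ⟨hx0, hx1⟩ := hx
  unfold gblKernel
  rw [add_sub_right_comm P, add_sub_right_comm Q, mpow_add_one hx0,
    mpow_add_one (sub_pos.mpr hx1)]
  simp only [smul_mul_assoc, mul_smul_comm, ← smul_add, ← add_smul, Complex.ofReal_sub,
    Complex.ofReal_one, add_sub_cancel, one_smul]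

theorem GBL_add_one_add_GBL_add_one
    (hP : IntegrableOn (gblKernel φ ψ η ξ R S a b (P + 1) Q) (Set.Ioo 0 1))
    (hQ : IntegrableOn (gblKernel φ ψ η ξ R S a b P (Q + 1)) (Set.Ioo 0 1)) :
    GBL φ ψ η ξ R S a b (P + 1) Q + GBL φ ψ η ξ R S a b P (Q + 1) = GBL φ ψ η ξ R S a b P Q := by
  rw [GBL, GBL, ← integral_add hP hQ]
  exact setIntegral_congr_fun measurableSet_Ioo fun x hx =>
    gblKernel_add_one_add_gblKernel_add_one φ ψ η ξ R S a b P Q hx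

end Recurrence

theorem GB_recurrence_general {k : ℕ} (P Q R S : Matrix (Fin k) (Fin k) ℂ)
    (φ ψ η ξ : ℝ)
    (hInt : ∀ m n : ℕ, IntegrableOn
      (gblKernel φ ψ η ξ R S 1 1 (P + m • (1 : Matrix (Fin k) (Fin k) ℂ))
        (Q + n • (1 : Matrix (Fin k) (Fin k) ℂ))) (Set.Ioo 0 1)) :
    GB φ ψ η ξ R S (P + 1) Q + GB φ ψ η ξ R S P (Q + 1) = GB φ ψ η ξ R S P Q :=
  GBL_add_one_add_GBL_add_one φ ψ η ξ R S 1 1 P Q (by simpa using hInt 1 0)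
    (by simpa using hInt 0 1)

theorem GB_recurrence {k : ℕ} (hk : 1 ≤ k) (P Q R S : Matrix (Fin k) (Fin k) ℂ)
    (hP : P.PosDef) (hQ : Q.PosDef) (hR : R.PosDef) (hS : S.PosDef)
    (φ ψ η ξ : ℝ) (hφ : 0 < φ) (hψ : 0 < ψ) (hη : 0 < η) (hξ : 0 < ξ)
    (hInt : ∀ m n : ℕ, IntegrableOn
      (gblKernel φ ψ η ξ R S 1 1 (P + m • (1 : Matrix (Fin k) (Fin k) ℂ))
        (Q + n • (1 : Matrix (Fin k) (Fin k) ℂ))) (Set.Ioo 0 1)) :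
    GB φ ψ η ξ R S (P + 1) Q + GB φ ψ η ξ R S P (Q + 1) = GB φ ψ η ξ R S P Q :=
  GB_recurrence_general P Q R S φ ψ η ξ hInt

end
end

section
/- Let k ≥ 1, let P, Q, R, S be Hermitian positive definite k×k complex matrices, and let φ, ψ, η, ξ > 0 be real numbers. Then the generalized beta matrix function admits the infinite-sum representation B_{(φ,ψ)}^{(R,S,η,ξ)}(P,Q) = ∑_{n=0}^∞ B_{(φ,ψ)}^{(R,S,η,ξ)}(P+nI,Q+I), the series converging in the space of k×k complex matrices. -/
open MeasureTheory Real
open scoped Matrix.Norms.L2Operator ComplexOrder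

noncomputable section

/-! Since `x^{(P + nI) - I} = xⁿ x^{P-I}` and `(1-x)^{(Q+I)-I} = (1-x) (1-x)^{Q-I}`, the integrand
of the `n`-th term is `xⁿ(1-x)` times the integrand of `B(P,Q)`. As `∑ xⁿ(1-x) = 1` on `(0,1)`,
dominated convergence, with the norm of the integrand of `B(P,Q)` as dominating function,
sums the series to `B(P,Q)`. -/

theorem hasSum_setIntegral_Ioo_pow_mul_one_sub_smul {E : Type*} [NormedAddCommGroup E]
    [NormedSpace ℝ E] {g : ℝ → E} (hg : IntegrableOn g (Set.Ioo 0 1)) :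
    HasSum (fun n : ℕ => ∫ x in Set.Ioo (0 : ℝ) 1, (x ^ n * (1 - x)) • g x)
      (∫ x in Set.Ioo (0 : ℝ) 1, g x) := by
  have hweights : ∀ x ∈ Set.Ioo (0 : ℝ) 1, HasSum (fun n : ℕ => x ^ n * (1 - x)) 1 := by
    intro x hx
    have h := (hasSum_geometric_of_lt_one hx.1.le hx.2).mul_right (1 - x)
    rwa [inv_mul_cancel₀ (sub_ne_zero.mpr hx.2.ne')] at h
  refine hasSum_integral_of_dominated_convergence (fun n x => x ^ n * (1 - x) * ‖g x‖)
    (fun n => ((by fun_prop : Continuous fun x : ℝ => x ^ n * (1 - x)).aestronglyMeasurable.smul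
      hg.aestronglyMeasurable)) (fun n => ?_) ?_ ?_ ?_
  · filter_upwards [self_mem_ae_restrict measurableSet_Ioo] with x hx
    rw [norm_smul, Real.norm_of_nonneg (mul_nonneg (pow_nonneg hx.1.le n) (sub_pos.mpr hx.2).le)]
  · filter_upwards [self_mem_ae_restrict measurableSet_Ioo] with x hx
    exact ((hweights x hx).mul_right ‖g x‖).summable
  · refine hg.norm.congr ?_
    filter_upwards [self_mem_ae_restrict measurableSet_Ioo] with x hx
    rw [((hweights x hx).mul_right ‖g x‖).tsum_eq, one_mul]
  · filter_upwards [self_mem_ae_restrict measurableSet_Ioo] with x hx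
    simpa using (hweights x hx).smul_const (g x)

theorem mpow_add_smul_one {k : ℕ} (t : ℝ) (A : Matrix (Fin k) (Fin k) ℂ) (c : ℂ) :
    mpow t (A + c • 1) = Complex.exp (Real.log t * c) • mpow t A := by
  have hcomm : Commute ((Real.log t : ℂ) • A) ((Real.log t * c : ℂ) • 1) :=
    ((Commute.one_right A).smul_left _).smul_right _
  rw [mpow, mpow, smul_add, smul_smul, Matrix.exp_add_of_commute _ _ hcomm,
    ← Algebra.algebraMap_eq_smul_one, ← NormedSpace.algebraMap_exp_comm,
    Algebra.algebraMap_eq_smul_one, mul_smul_one, Complex.exp_eq_exp_ℂ]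

theorem mpow_add_natCast_smul_one {k : ℕ} {t : ℝ} (ht : 0 < t) (A : Matrix (Fin k) (Fin k) ℂ)
    (n : ℕ) : mpow t (A + (n : ℂ) • 1) = t ^ n • mpow t A := by
  rw [mpow_add_smul_one, mul_comm, Complex.exp_nat_mul, ← Complex.ofReal_exp, Real.exp_log ht,
    ← Complex.ofReal_pow, Complex.coe_smul]

theorem gblKernel_add_nsmul_one_add_one {k : ℕ} (φ ψ η ξ : ℝ) (R S : Matrix (Fin k) (Fin k) ℂ)
    (a b : ℝ) (P Q : Matrix (Fin k) (Fin k) ℂ) (n : ℕ) {x : ℝ} (hx : x ∈ Set.Ioo (0 : ℝ) 1) :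
    gblKernel φ ψ η ξ R S a b (P + n • 1) (Q + 1) x =
      (x ^ n * (1 - x)) • gblKernel φ ψ η ξ R S a b P Q x := by
  have hP : P + n • 1 - 1 = (P - 1) + (n : ℂ) • (1 : Matrix (Fin k) (Fin k) ℂ) := by
    rw [Nat.cast_smul_eq_nsmul]; abel
  have hQ : Q + 1 - 1 = (Q - 1) + ((1 : ℕ) : ℂ) • (1 : Matrix (Fin k) (Fin k) ℂ) := by
    rw [Nat.cast_one, one_smul]; abel
  rw [gblKernel, gblKernel, hP, hQ, mpow_add_natCast_smul_one hx.1,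
    mpow_add_natCast_smul_one (sub_pos.mpr hx.2), pow_one]
  simp only [smul_mul_assoc, mul_smul_comm, smul_smul]
  ring_nf

theorem GB_infinite_sum_left_general {k : ℕ} (P Q R S : Matrix (Fin k) (Fin k) ℂ)
    (φ ψ η ξ : ℝ)
    (hInt : ∀ m n : ℕ, IntegrableOn
      (gblKernel φ ψ η ξ R S 1 1 (P + m • (1 : Matrix (Fin k) (Fin k) ℂ))
        (Q + n • (1 : Matrix (Fin k) (Fin k) ℂ))) (Set.Ioo 0 1)) :
    GB φ ψ η ξ R S P Q =
      ∑' n : ℕ, GB φ ψ η ξ R S (P + n • (1 : Matrix (Fin k) (Fin k) ℂ)) (Q + 1) := by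
  have hPQ : IntegrableOn (gblKernel φ ψ η ξ R S 1 1 P Q) (Set.Ioo 0 1) := by
    simpa using hInt 0 0
  refine ((hasSum_setIntegral_Ioo_pow_mul_one_sub_smul hPQ).congr_fun fun n => ?_).tsum_eq.symm
  exact setIntegral_congr_fun measurableSet_Ioo fun x hx =>
    gblKernel_add_nsmul_one_add_one φ ψ η ξ R S 1 1 P Q n hx

theorem GB_infinite_sum_left {k : ℕ} (hk : 1 ≤ k) (P Q R S : Matrix (Fin k) (Fin k) ℂ)
    (hP : P.PosDef) (hQ : Q.PosDef) (hR : R.PosDef) (hS : S.PosDef)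
    (φ ψ η ξ : ℝ) (hφ : 0 < φ) (hψ : 0 < ψ) (hη : 0 < η) (hξ : 0 < ξ)
    (hInt : ∀ m n : ℕ, IntegrableOn
      (gblKernel φ ψ η ξ R S 1 1 (P + m • (1 : Matrix (Fin k) (Fin k) ℂ))
        (Q + n • (1 : Matrix (Fin k) (Fin k) ℂ))) (Set.Ioo 0 1)) :
    GB φ ψ η ξ R S P Q =
      ∑' n : ℕ, GB φ ψ η ξ R S (P + n • (1 : Matrix (Fin k) (Fin k) ℂ)) (Q + 1) :=
  GB_infinite_sum_left_general P Q R S φ ψ η ξ hInt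

end
end

section
/- Let k ≥ 1, let P, Q, R, S be Hermitian positive definite k×k complex matrices, let φ, ψ, η, ξ, a, b > 0 be real numbers, and let m be a natural number. Then the generalized beta-logarithmic matrix function satisfies the finite binomial sum identity BL_{(φ,ψ)}^{(R,S,η,ξ)}(a,b;P,Q) = ∑_{n=0}^{m} C(m,n) · BL_{(φ,ψ)}^{(R,S,η,ξ)}(a,b; P+nI, Q+(m−n)I), where C(m,n) denotes the binomial coefficient. -/
open MeasureTheory Real
open scoped Matrix.Norms.L2Operator ComplexOrder

noncomputable section

/-! Since `I` commutes with every matrix, `x ^ (P + nI - I) = xⁿ • x ^ (P - I)`, so shifting `P`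
and `Q` by `nI` and `(m - n)I` multiplies the integrand by the scalar `xⁿ (1 - x)^(m - n)`. Summed
against the binomial coefficients these scalars give `(x + (1 - x))^m = 1`, pointwise on `(0, 1)`;
integrating term by term yields the identity. -/

theorem mpow_add_of_commute {k : ℕ} (t : ℝ) {A B : Matrix (Fin k) (Fin k) ℂ} (h : Commute A B) :
    mpow t (A + B) = mpow t A * mpow t B := by
  rw [mpow, smul_add, Matrix.exp_add_of_commute _ _ ((h.smul_left _).smul_right _)]
  rfl

theorem mpow_smul_one {k : ℕ} {t : ℝ} (ht : 0 < t) (c : ℝ) :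
    mpow t ((c : ℂ) • (1 : Matrix (Fin k) (Fin k) ℂ)) = (t ^ c) • 1 := by
  rw [mpow, smul_smul, ← Algebra.algebraMap_eq_smul_one, ← NormedSpace.algebraMap_exp_comm,
    ← Complex.exp_eq_exp_ℂ, ← Complex.ofReal_mul, ← Complex.ofReal_exp,
    ← Real.rpow_def_of_pos ht, Algebra.algebraMap_eq_smul_one, Complex.coe_smul]

theorem mpow_add_nsmul_one {k : ℕ} {t : ℝ} (ht : 0 < t) (A : Matrix (Fin k) (Fin k) ℂ) (n : ℕ) :
    mpow t (A + n • 1) = (t ^ n) • mpow t A := by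
  have hn : n • (1 : Matrix (Fin k) (Fin k) ℂ) = ((n : ℝ) : ℂ) • 1 := by
    rw [Complex.ofReal_natCast, Nat.cast_smul_eq_nsmul]
  rw [hn, mpow_add_of_commute t (Commute.one_right A |>.smul_right _), mpow_smul_one ht,
    Real.rpow_natCast, mul_smul_comm, mul_one]

theorem gblKernel_add_nsmul_one {k : ℕ} (φ ψ η ξ : ℝ) (R S : Matrix (Fin k) (Fin k) ℂ) (a b : ℝ)
    (P Q : Matrix (Fin k) (Fin k) ℂ) {x : ℝ} (hx₀ : 0 < x) (hx₁ : x < 1) (n n' : ℕ) :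
    gblKernel φ ψ η ξ R S a b (P + n • 1) (Q + n' • 1) x
      = (x ^ n * (1 - x) ^ n') • gblKernel φ ψ η ξ R S a b P Q x := by
  have hP : P + n • 1 - 1 = (P - 1) + n • 1 := add_sub_right_comm _ _ _
  have hQ : Q + n' • 1 - 1 = (Q - 1) + n' • 1 := add_sub_right_comm _ _ _
  rw [gblKernel, gblKernel, hP, hQ, mpow_add_nsmul_one hx₀, mpow_add_nsmul_one (sub_pos.2 hx₁)]
  simp only [smul_mul_assoc, mul_smul_comm, smul_smul]
  ring_nf

theorem sum_choose_smul_gblKernel_add_nsmul_one {k : ℕ} (φ ψ η ξ : ℝ)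
    (R S : Matrix (Fin k) (Fin k) ℂ) (a b : ℝ) (P Q : Matrix (Fin k) (Fin k) ℂ) {x : ℝ}
    (hx₀ : 0 < x) (hx₁ : x < 1) (m : ℕ) :
    ∑ n ∈ Finset.range (m + 1), (m.choose n : ℝ) •
        gblKernel φ ψ η ξ R S a b (P + n • 1) (Q + (m - n) • 1) x
      = gblKernel φ ψ η ξ R S a b P Q x :=
  calc _ = ∑ n ∈ Finset.range (m + 1), (x ^ n * (1 - x) ^ (m - n) * m.choose n) •
          gblKernel φ ψ η ξ R S a b P Q x := by
        refine Finset.sum_congr rfl fun n _ => ?_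
        rw [gblKernel_add_nsmul_one φ ψ η ξ R S a b P Q hx₀ hx₁, smul_smul, mul_comm]
    _ = (x + (1 - x)) ^ m • gblKernel φ ψ η ξ R S a b P Q x := by
        rw [← Finset.sum_smul, add_pow]
    _ = _ := by rw [add_sub_cancel, one_pow, one_smul]

theorem GBL_finite_sum_general {k : ℕ} (P Q R S : Matrix (Fin k) (Fin k) ℂ)
    (φ ψ η ξ a b : ℝ) (m : ℕ)
    (hInt : ∀ m' n' : ℕ, IntegrableOn
      (gblKernel φ ψ η ξ R S a b (P + m' • (1 : Matrix (Fin k) (Fin k) ℂ))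
        (Q + n' • (1 : Matrix (Fin k) (Fin k) ℂ))) (Set.Ioo 0 1)) :
    GBL φ ψ η ξ R S a b P Q =
      ∑ n ∈ Finset.range (m + 1), m.choose n •
        GBL φ ψ η ξ R S a b (P + n • (1 : Matrix (Fin k) (Fin k) ℂ))
          (Q + (m - n) • (1 : Matrix (Fin k) (Fin k) ℂ)) := by
  calc GBL φ ψ η ξ R S a b P Q
      = ∫ x in Set.Ioo 0 1, ∑ n ∈ Finset.range (m + 1), (m.choose n : ℝ) •
          gblKernel φ ψ η ξ R S a b (P + n • 1) (Q + (m - n) • 1) x :=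
        setIntegral_congr_fun measurableSet_Ioo fun x ⟨hx₀, hx₁⟩ =>
          (sum_choose_smul_gblKernel_add_nsmul_one φ ψ η ξ R S a b P Q hx₀ hx₁ m).symm
    _ = _ := by
        rw [integral_finsetSum]
        · simp_rw [integral_smul, Nat.cast_smul_eq_nsmul, GBL]
        · exact fun n _ => (hInt n (m - n)).smul (m.choose n : ℝ)

theorem GBL_finite_sum {k : ℕ} (hk : 1 ≤ k) (P Q R S : Matrix (Fin k) (Fin k) ℂ)
    (hP : P.PosDef) (hQ : Q.PosDef) (hR : R.PosDef) (hS : S.PosDef)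
    (φ ψ η ξ a b : ℝ) (hφ : 0 < φ) (hψ : 0 < ψ) (hη : 0 < η) (hξ : 0 < ξ)
    (ha : 0 < a) (hb : 0 < b) (m : ℕ)
    (hInt : ∀ m' n' : ℕ, IntegrableOn
      (gblKernel φ ψ η ξ R S a b (P + m' • (1 : Matrix (Fin k) (Fin k) ℂ))
        (Q + n' • (1 : Matrix (Fin k) (Fin k) ℂ))) (Set.Ioo 0 1)) :
    GBL φ ψ η ξ R S a b P Q =
      ∑ n ∈ Finset.range (m + 1), m.choose n •
        GBL φ ψ η ξ R S a b (P + n • (1 : Matrix (Fin k) (Fin k) ℂ))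
          (Q + (m - n) • (1 : Matrix (Fin k) (Fin k) ℂ)) :=
  GBL_finite_sum_general P Q R S φ ψ η ξ a b m hInt

end
end
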